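/- Assume that for every control the homogeneous atomistic and continuum states exist and are unique (write vᵃ(·) and vᶜ(·) for the resulting linear maps). Let ũᵃ be the atomistic solution, uᶜ* the continuum lifting of ũᵃ, and let (θᵃ_op, θᶜ_op) ∈ ℝ² × ℝ minimize J(θᵃ,θᶜ) = ½ Σ_{i=K}^{L} ((vᵃ(θᵃ)_i + uᵃ⁰_i) − (vᶜ(θᶜ)_i + uᶜ⁰_i))². Then, with rᵃ = (ũᵃ_{L−1}, ũᵃ_L) and rᶜ = ũᵃ_K, one has ( Σ_{i=K}^{L} ( vᵃ(rᵃ − θᵃ_op)_i − vᶜ(rᶜ − θᶜ_op)_i )² )^{1/2} ≤ ( Σ_{i=K}^{L} ( ũᵃ_i − uᶜ*_i )² )^{1/2}. -/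

import Mathlib

/-!
Let `Φ(θᵃ, θᶜ) = (vᵃ(θᵃ) + uᵃ⁰) - (vᶜ(θᶜ) + uᶜ⁰)` on `{K, …, L}`. Uniqueness of the homogeneous
states makes `vᵃ`, `vᶜ` linear and gives `ũᵃ = vᵃ(rᵃ) + uᵃ⁰`, `uᶜ* = vᶜ(rᶜ) + uᶜ⁰`. Hence `Φ` is
affine, the true error `ũᵃ - uᶜ*` is `Φ(r)`, and the left-hand side is `Φ(r) - Φ(θ_op)`.
Minimality of `θ_op` along the line through `θ_op` and `r` makes `Φ(θ_op)` orthogonal to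
`Φ(r) - Φ(θ_op)`, and Pythagoras gives `‖Φ(r) - Φ(θ_op)‖ ≤ ‖Φ(r)‖`.
-/

theorem norm_le_norm_add_of_forall_norm_le_norm_add_smul {F : Type*} [NormedAddCommGroup F]
    [InnerProductSpace ℝ F] {d g : F} (h : ∀ t : ℝ, ‖d‖ ≤ ‖d + t • g‖) : ‖g‖ ≤ ‖d + g‖ := by
  have expand (t : ℝ) :
      ‖d + t • g‖ ^ 2 = ‖g‖ ^ 2 * (t * t) + 2 * inner ℝ d g * t + ‖d‖ ^ 2 := by
    rw [norm_add_sq_real, norm_smul, inner_smul_right, Real.norm_eq_abs, mul_pow, sq_abs]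
    ring
  have hdisc : discrim (‖g‖ ^ 2) (2 * inner ℝ d g) 0 ≤ 0 := discrim_le_zero fun t => by
    nlinarith [expand t, h t, norm_nonneg d]
  have horth : inner ℝ d g = 0 := by
    rw [discrim] at hdisc
    nlinarith [sq_nonneg (inner ℝ d g)]
  have hpyth := norm_add_sq_eq_norm_sq_add_norm_sq_real horth
  nlinarith [norm_nonneg g, norm_nonneg (d + g), sq_nonneg ‖d‖]

theorem sqrt_sum_sq_le_sqrt_sum_add_sq_of_forall_le {ι : Type*} (s : Finset ι) (d g : ι → ℝ)
    (h : ∀ t : ℝ, ∑ i ∈ s, d i ^ 2 ≤ ∑ i ∈ s, (d i + t * g i) ^ 2) :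
    √(∑ i ∈ s, g i ^ 2) ≤ √(∑ i ∈ s, (d i + g i) ^ 2) := by
  let toL2 (u : ι → ℝ) : EuclideanSpace ℝ s := WithLp.toLp 2 fun i => u i
  have norm_toL2 (u : ι → ℝ) : ‖toL2 u‖ = √(∑ i ∈ s, u i ^ 2) := by
    rw [EuclideanSpace.norm_eq, ← Finset.sum_coe_sort s]
    simp [toL2]
  have toL2_add_smul (t : ℝ) : toL2 d + t • toL2 g = toL2 (d + t • g) := rfl
  have hnorm := norm_le_norm_add_of_forall_norm_le_norm_add_smul (d := toL2 d) (g := toL2 g)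
    fun t => by
      rw [toL2_add_smul, norm_toL2, norm_toL2]
      exact Real.sqrt_le_sqrt (h t)
  rwa [show toL2 d + toL2 g = toL2 (d + g) from rfl, norm_toL2, norm_toL2] at hnorm

theorem sqrt_sum_sq_homogeneous_error_le {ι Θa Θc : Type*} [AddCommGroup Θa] [Module ℝ Θa]
    [AddCommGroup Θc] [Module ℝ Θc] (s : Finset ι) (vA : Θa → ι → ℝ) (vC : Θc → ι → ℝ)
    (hA : ∀ a b (t : ℝ), ∀ i ∈ s, vA (a + t • b) i = vA a i + t * vA b i)
    (hC : ∀ a b (t : ℝ), ∀ i ∈ s, vC (a + t • b) i = vC a i + t * vC b i)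
    {ua ua0 uc uc0 : ι → ℝ} {rA : Θa} {rC : Θc}
    (hua : ∀ i ∈ s, ua i = vA rA i + ua0 i) (huc : ∀ i ∈ s, uc i = vC rC i + uc0 i)
    {θA : Θa} {θC : Θc}
    (hmin : ∀ θa θc, ∑ i ∈ s, ((vA θA i + ua0 i) - (vC θC i + uc0 i)) ^ 2 ≤
      ∑ i ∈ s, ((vA θa i + ua0 i) - (vC θc i + uc0 i)) ^ 2) :
    √(∑ i ∈ s, (vA (rA - θA) i - vC (rC - θC) i) ^ 2) ≤ √(∑ i ∈ s, (ua i - uc i) ^ 2) := by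
  let residual (θa : Θa) (θc : Θc) (i : ι) : ℝ := (vA θa i + ua0 i) - (vC θc i + uc0 i)
  let g (i : ι) : ℝ := vA (rA - θA) i - vC (rC - θC) i
  have residual_line (t : ℝ) : ∀ i ∈ s,
      residual (θA + t • (rA - θA)) (θC + t • (rC - θC)) i = residual θA θC i + t * g i := by
    intro i hi
    simp only [residual, g, hA _ _ t i hi, hC _ _ t i hi]
    ring
  have error_eq : ∀ i ∈ s, ua i - uc i = residual θA θC i + g i := by
    intro i hi
    have hr := residual_line 1 i hi
    simp only [one_smul, one_mul, add_sub_cancel] at hr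
    rw [← hr, hua i hi, huc i hi]
  have bound := sqrt_sum_sq_le_sqrt_sum_add_sq_of_forall_le s (residual θA θC) g fun t => calc
    ∑ i ∈ s, residual θA θC i ^ 2
        ≤ ∑ i ∈ s, residual (θA + t • (rA - θA)) (θC + t • (rC - θC)) i ^ 2 := hmin _ _
    _ = ∑ i ∈ s, (residual θA θC i + t * g i) ^ 2 :=
      Finset.sum_congr rfl fun i hi => by rw [residual_line t i hi]
  have error_sq : ∑ i ∈ s, (ua i - uc i) ^ 2 = ∑ i ∈ s, (residual θA θC i + g i) ^ 2 :=
    Finset.sum_congr rfl fun i hi => by rw [error_eq i hi]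
  rwa [error_sq]

def atomisticOp (k1 k2 : ℝ) (w : ℤ → ℝ) (i : ℤ) : ℝ :=
  -k1 * (w (i - 1) - 2 * w i + w (i + 1)) - k2 * (w (i - 2) - 2 * w i + w (i + 2))

def continuumOp (kc : ℝ) (w : ℤ → ℝ) (i : ℤ) : ℝ :=
  -kc * (w (i - 1) - 2 * w i + w (i + 1))

def IsAtomisticState (k1 k2 : ℝ) (L : ℤ) (g : ℤ → ℝ) (θ : ℝ × ℝ) (w : ℤ → ℝ) : Prop :=
  (∀ i, 2 ≤ i → i ≤ L - 2 → atomisticOp k1 k2 w i = g i) ∧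
    w 0 = 0 ∧ w 1 = 0 ∧ w (L - 1) = θ.1 ∧ w L = θ.2

def IsContinuumState (kc : ℝ) (K N : ℤ) (g : ℤ → ℝ) (θ : ℝ) (w : ℤ → ℝ) : Prop :=
  (∀ i, K + 1 ≤ i → i ≤ N - 2 → continuumOp kc w i = g i) ∧ w K = θ ∧ w (N - 1) = 0

section Atomistic

variable {k1 k2 : ℝ} {L : ℤ} {vA : ℝ × ℝ → ℤ → ℝ}

theorem atomisticState_apply_add_smul (hvA : ∀ θ, IsAtomisticState k1 k2 L 0 θ (vA θ))
    (huniq : ∀ θ w, IsAtomisticState k1 k2 L 0 θ w → ∀ i, 0 ≤ i → i ≤ L → w i = vA θ i)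
    (a b : ℝ × ℝ) (t : ℝ) {i : ℤ} (hi : i ∈ Set.Icc 0 L) :
    vA (a + t • b) i = vA a i + t * vA b i := by
  obtain ⟨ha, ha₀, ha₁, haL₁, haL⟩ := hvA a
  obtain ⟨hb, hb₀, hb₁, hbL₁, hbL⟩ := hvA b
  refine (huniq _ (fun j => vA a j + t * vA b j) ⟨fun j hj₂ hjL => ?_, ?_, ?_, ?_, ?_⟩
    i hi.1 hi.2).symm
  · simp only [atomisticOp, Pi.zero_apply] at ha hb ⊢
    linear_combination ha j hj₂ hjL + t * hb j hj₂ hjL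
  all_goals simp [*]

theorem atomisticState_eq_add
    (huniq : ∀ θ w, IsAtomisticState k1 k2 L 0 θ w → ∀ i, 0 ≤ i → i ≤ L → w i = vA θ i)
    {f w w₀ : ℤ → ℝ} {θ : ℝ × ℝ} (hw : IsAtomisticState k1 k2 L f θ w)
    (hw₀ : IsAtomisticState k1 k2 L f 0 w₀) {i : ℤ} (hi : i ∈ Set.Icc 0 L) :
    w i = vA θ i + w₀ i := by
  obtain ⟨hw, hw0, hw1, hwL₁, hwL⟩ := hw
  obtain ⟨hw₀, hw₀0, hw₀1, hw₀L₁, hw₀L⟩ := hw₀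
  have := huniq θ (w - w₀) ⟨fun j hj₂ hjL => ?_, ?_, ?_, ?_, ?_⟩ i hi.1 hi.2
  · simp only [Pi.sub_apply] at this; linarith
  · simp only [atomisticOp, Pi.sub_apply, Pi.zero_apply] at hw hw₀ ⊢
    linear_combination hw j hj₂ hjL - hw₀ j hj₂ hjL
  all_goals simp_all

end Atomistic

section Continuum

variable {kc : ℝ} {K N : ℤ} {vC : ℝ → ℤ → ℝ}

theorem continuumState_apply_add_smul (hvC : ∀ θ, IsContinuumState kc K N 0 θ (vC θ))
    (huniq : ∀ θ w, IsContinuumState kc K N 0 θ w → ∀ i, K ≤ i → i ≤ N - 1 → w i = vC θ i)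
    (a b t : ℝ) {i : ℤ} (hi : i ∈ Set.Icc K (N - 1)) :
    vC (a + t • b) i = vC a i + t * vC b i := by
  obtain ⟨ha, haK, haN⟩ := hvC a
  obtain ⟨hb, hbK, hbN⟩ := hvC b
  refine (huniq _ (fun j => vC a j + t * vC b j) ⟨fun j hKj hjN => ?_, ?_, ?_⟩ i hi.1 hi.2).symm
  · simp only [continuumOp, Pi.zero_apply] at ha hb ⊢
    linear_combination ha j hKj hjN + t * hb j hKj hjN
  all_goals simp [*]

theorem continuumState_eq_add
    (huniq : ∀ θ w, IsContinuumState kc K N 0 θ w → ∀ i, K ≤ i → i ≤ N - 1 → w i = vC θ i)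
    {f w w₀ : ℤ → ℝ} {θ : ℝ} (hw : IsContinuumState kc K N f θ w)
    (hw₀ : IsContinuumState kc K N f 0 w₀) {i : ℤ} (hi : i ∈ Set.Icc K (N - 1)) :
    w i = vC θ i + w₀ i := by
  obtain ⟨hw, hwK, hwN⟩ := hw
  obtain ⟨hw₀, hw₀K, hw₀N⟩ := hw₀
  have := huniq θ (w - w₀) ⟨fun j hKj hjN => ?_, ?_, ?_⟩ i hi.1 hi.2
  · simp only [Pi.sub_apply] at this; linarith
  · simp only [continuumOp, Pi.sub_apply, Pi.zero_apply] at hw hw₀ ⊢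
    linear_combination hw j hKj hjN - hw₀ j hKj hjN
  all_goals simp_all

end Continuum

theorem reduced_space_approximation_error_general (k1 k2 : ℝ)
    (N K L : ℤ) (hK : 0 < K) (hL : L ≤ N - 1)
    (f ua ua0 uc0 ucstar : ℤ → ℝ) (vA : ℝ × ℝ → ℤ → ℝ) (vC : ℝ → ℤ → ℝ)
    -- vA θa is a homogeneous atomistic state with control θa, for every θa
    (hvA : ∀ θa : ℝ × ℝ,
      (∀ i, 2 ≤ i → i ≤ L - 2 →
        -k1 * (vA θa (i - 1) - 2 * vA θa i + vA θa (i + 1))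
          - k2 * (vA θa (i - 2) - 2 * vA θa i + vA θa (i + 2)) = 0) ∧
      vA θa 0 = 0 ∧ vA θa 1 = 0 ∧ vA θa (L - 1) = θa.1 ∧ vA θa L = θa.2)
    -- and it is the unique such state
    (hvAuniq : ∀ (θa : ℝ × ℝ) (w : ℤ → ℝ),
      (∀ i, 2 ≤ i → i ≤ L - 2 →
        -k1 * (w (i - 1) - 2 * w i + w (i + 1))
          - k2 * (w (i - 2) - 2 * w i + w (i + 2)) = 0) →
      w 0 = 0 → w 1 = 0 → w (L - 1) = θa.1 → w L = θa.2 →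
      ∀ i, 0 ≤ i → i ≤ L → w i = vA θa i)
    -- vC θc is a homogeneous continuum state with control θc, for every θc
    (hvC : ∀ θc : ℝ,
      (∀ i, K + 1 ≤ i → i ≤ N - 2 →
        -(k1 + 4 * k2) * (vC θc (i - 1) - 2 * vC θc i + vC θc (i + 1)) = 0) ∧
      vC θc K = θc ∧ vC θc (N - 1) = 0)
    -- and it is the unique such state
    (hvCuniq : ∀ (θc : ℝ) (w : ℤ → ℝ),
      (∀ i, K + 1 ≤ i → i ≤ N - 2 →
        -(k1 + 4 * k2) * (w (i - 1) - 2 * w i + w (i + 1)) = 0) →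
      w K = θc → w (N - 1) = 0 →
      ∀ i, K ≤ i → i ≤ N - 1 → w i = vC θc i)
    -- ua is the atomistic solution
    (hua : ∀ i, 2 ≤ i → i ≤ N - 2 →
      -k1 * (ua (i - 1) - 2 * ua i + ua (i + 1))
        - k2 * (ua (i - 2) - 2 * ua i + ua (i + 2)) = f i)
    (hua0' : ua 0 = 0) (hua1 : ua 1 = 0)
    -- ua0 is the particular atomistic state with homogeneous boundary data
    (hua0 : ∀ i, 2 ≤ i → i ≤ L - 2 →
      -k1 * (ua0 (i - 1) - 2 * ua0 i + ua0 (i + 1))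
        - k2 * (ua0 (i - 2) - 2 * ua0 i + ua0 (i + 2)) = f i)
    (hua00 : ua0 0 = 0) (hua01 : ua0 1 = 0) (hua0L1 : ua0 (L - 1) = 0)
    (hua0L : ua0 L = 0)
    -- uc0 is the particular continuum state with homogeneous boundary data
    (huc0 : ∀ i, K + 1 ≤ i → i ≤ N - 2 →
      -(k1 + 4 * k2) * (uc0 (i - 1) - 2 * uc0 i + uc0 (i + 1)) = f i)
    (huc0K : uc0 K = 0) (huc0N : uc0 (N - 1) = 0)
    -- ucstar is the continuum lifting of ua
    (hucs : ∀ i, K + 1 ≤ i → i ≤ N - 2 →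
      -(k1 + 4 * k2) * (ucstar (i - 1) - 2 * ucstar i + ucstar (i + 1)) = f i)
    (hucsK : ucstar K = ua K) (hucsN : ucstar (N - 1) = 0)
    -- (θa_op, θc_op) minimizes the reduced objective J
    (θaop : ℝ × ℝ) (θcop : ℝ)
    (hmin : ∀ (θa : ℝ × ℝ) (θc : ℝ),
      (1 / 2) * ∑ i ∈ Finset.Icc K L,
          ((vA θaop i + ua0 i) - (vC θcop i + uc0 i)) ^ 2 ≤
        (1 / 2) * ∑ i ∈ Finset.Icc K L,
          ((vA θa i + ua0 i) - (vC θc i + uc0 i)) ^ 2) :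
    Real.sqrt (∑ i ∈ Finset.Icc K L,
        (vA ((ua (L - 1), ua L) - θaop) i - vC (ua K - θcop) i) ^ 2) ≤
      Real.sqrt (∑ i ∈ Finset.Icc K L, (ua i - ucstar i) ^ 2) := by
  have uniqA : ∀ θ w, IsAtomisticState k1 k2 L 0 θ w → ∀ i, 0 ≤ i → i ≤ L → w i = vA θ i :=
    fun θ w h => hvAuniq θ w h.1 h.2.1 h.2.2.1 h.2.2.2.1 h.2.2.2.2
  have uniqC : ∀ θ w, IsContinuumState (k1 + 4 * k2) K N 0 θ w →
      ∀ i, K ≤ i → i ≤ N - 1 → w i = vC θ i :=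
    fun θ w h => hvCuniq θ w h.1 h.2.1 h.2.2
  have ua_state : IsAtomisticState k1 k2 L f (ua (L - 1), ua L) ua :=
    ⟨fun i hi hiL => hua i hi (by omega), hua0', hua1, rfl, rfl⟩
  have atom_range : ∀ i ∈ Finset.Icc K L, i ∈ Set.Icc 0 L := fun i hi =>
    Set.Icc_subset_Icc hK.le le_rfl (Finset.mem_Icc.mp hi)
  have cont_range : ∀ i ∈ Finset.Icc K L, i ∈ Set.Icc K (N - 1) := fun i hi =>
    Set.Icc_subset_Icc le_rfl hL (Finset.mem_Icc.mp hi)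
  exact sqrt_sum_sq_homogeneous_error_le (Finset.Icc K L) vA vC
    (fun a b t i hi => atomisticState_apply_add_smul hvA uniqA a b t (atom_range i hi))
    (fun a b t i hi => continuumState_apply_add_smul hvC uniqC a b t (cont_range i hi))
    (fun i hi => atomisticState_eq_add uniqA ua_state ⟨hua0, hua00, hua01, hua0L1, hua0L⟩
      (atom_range i hi))
    (fun i hi => continuumState_eq_add uniqC ⟨hucs, hucsK, hucsN⟩ ⟨huc0, huc0K, huc0N⟩
      (cont_range i hi))
    fun θa θc => by linarith [hmin θa θc]

/-- the approximation error bound for the reduced-space minimizer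
(Lemma `trace` of the paper). -/
theorem reduced_space_approximation_error (k1 k2 : ℝ)
    (hk1 : 0 < k1) (hk2 : k2 < 0) (hk : 0 < k1 + 4 * k2)
    (N K L : ℤ) (hN : 5 ≤ N) (hK : 0 < K) (hKL : K < L) (hL : L ≤ N - 1)
    (hL4 : 4 ≤ L)
    (f ua ua0 uc0 ucstar : ℤ → ℝ) (vA : ℝ × ℝ → ℤ → ℝ) (vC : ℝ → ℤ → ℝ)
    -- vA θa is a homogeneous atomistic state with control θa, for every θa
    (hvA : ∀ θa : ℝ × ℝ,
      (∀ i, 2 ≤ i → i ≤ L - 2 →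
        -k1 * (vA θa (i - 1) - 2 * vA θa i + vA θa (i + 1))
          - k2 * (vA θa (i - 2) - 2 * vA θa i + vA θa (i + 2)) = 0) ∧
      vA θa 0 = 0 ∧ vA θa 1 = 0 ∧ vA θa (L - 1) = θa.1 ∧ vA θa L = θa.2)
    -- and it is the unique such state
    (hvAuniq : ∀ (θa : ℝ × ℝ) (w : ℤ → ℝ),
      (∀ i, 2 ≤ i → i ≤ L - 2 →
        -k1 * (w (i - 1) - 2 * w i + w (i + 1))
          - k2 * (w (i - 2) - 2 * w i + w (i + 2)) = 0) →
      w 0 = 0 → w 1 = 0 → w (L - 1) = θa.1 → w L = θa.2 →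
      ∀ i, 0 ≤ i → i ≤ L → w i = vA θa i)
    -- vC θc is a homogeneous continuum state with control θc, for every θc
    (hvC : ∀ θc : ℝ,
      (∀ i, K + 1 ≤ i → i ≤ N - 2 →
        -(k1 + 4 * k2) * (vC θc (i - 1) - 2 * vC θc i + vC θc (i + 1)) = 0) ∧
      vC θc K = θc ∧ vC θc (N - 1) = 0)
    -- and it is the unique such state
    (hvCuniq : ∀ (θc : ℝ) (w : ℤ → ℝ),
      (∀ i, K + 1 ≤ i → i ≤ N - 2 →
        -(k1 + 4 * k2) * (w (i - 1) - 2 * w i + w (i + 1)) = 0) →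
      w K = θc → w (N - 1) = 0 →
      ∀ i, K ≤ i → i ≤ N - 1 → w i = vC θc i)
    -- ua is the atomistic solution
    (hua : ∀ i, 2 ≤ i → i ≤ N - 2 →
      -k1 * (ua (i - 1) - 2 * ua i + ua (i + 1))
        - k2 * (ua (i - 2) - 2 * ua i + ua (i + 2)) = f i)
    (hua0' : ua 0 = 0) (hua1 : ua 1 = 0) (huaN1 : ua (N - 1) = 0) (huaN : ua N = 0)
    -- ua0 is the particular atomistic state with homogeneous boundary data
    (hua0 : ∀ i, 2 ≤ i → i ≤ L - 2 →
      -k1 * (ua0 (i - 1) - 2 * ua0 i + ua0 (i + 1))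
        - k2 * (ua0 (i - 2) - 2 * ua0 i + ua0 (i + 2)) = f i)
    (hua00 : ua0 0 = 0) (hua01 : ua0 1 = 0) (hua0L1 : ua0 (L - 1) = 0)
    (hua0L : ua0 L = 0)
    -- uc0 is the particular continuum state with homogeneous boundary data
    (huc0 : ∀ i, K + 1 ≤ i → i ≤ N - 2 →
      -(k1 + 4 * k2) * (uc0 (i - 1) - 2 * uc0 i + uc0 (i + 1)) = f i)
    (huc0K : uc0 K = 0) (huc0N : uc0 (N - 1) = 0)
    -- ucstar is the continuum lifting of ua
    (hucs : ∀ i, K + 1 ≤ i → i ≤ N - 2 →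
      -(k1 + 4 * k2) * (ucstar (i - 1) - 2 * ucstar i + ucstar (i + 1)) = f i)
    (hucsK : ucstar K = ua K) (hucsN : ucstar (N - 1) = 0)
    -- (θa_op, θc_op) minimizes the reduced objective J
    (θaop : ℝ × ℝ) (θcop : ℝ)
    (hmin : ∀ (θa : ℝ × ℝ) (θc : ℝ),
      (1 / 2) * ∑ i ∈ Finset.Icc K L,
          ((vA θaop i + ua0 i) - (vC θcop i + uc0 i)) ^ 2 ≤
        (1 / 2) * ∑ i ∈ Finset.Icc K L,
          ((vA θa i + ua0 i) - (vC θc i + uc0 i)) ^ 2) :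
    Real.sqrt (∑ i ∈ Finset.Icc K L,
        (vA ((ua (L - 1), ua L) - θaop) i - vC (ua K - θcop) i) ^ 2) ≤
      Real.sqrt (∑ i ∈ Finset.Icc K L, (ua i - ucstar i) ^ 2) :=
  reduced_space_approximation_error_general k1 k2 N K L hK hL f ua ua0 uc0 ucstar vA vC hvA hvAuniq
    hvC hvCuniq hua hua0' hua1 hua0 hua00 hua01 hua0L1 hua0L huc0 huc0K huc0N hucs hucsK hucsN θaop
    θcop hmin
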